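/- Let X be a fractured Polish space with a fixed complete metric, μ a non-atomic Borel probability measure on X with full support, and T an ergodic measure-preserving homeomorphism of (X, μ). Then for every ε > 0, any array 𝒯 in X has a refinement 𝒯' with diam 𝒯' < ε, where the diameter of an array is the supremum of the diameters of its levels. -/

import Mathlib

open MeasureTheory Set TopologicalSpace

/-- A topological space is *fractured* if its topology has a countable base
consisting of clopen subsets. -/
def Fractured (X : Type*) [TopologicalSpace X] : Prop :=
  ∃ B : Set (Set X), B.Countable ∧ (∀ s ∈ B, IsClopen s) ∧ IsTopologicalBasis B

variable {X : Type*} [TopologicalSpace X]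

/-- A *column* of height `h` for a homeomorphism `T`: a clopen base `B₀` together with
integers `n₀ = 0, n₁, …, n_{h-1}` such that the levels `T^{nᵢ} B₀` are pairwise disjoint. -/
structure Column (T : X ≃ₜ X) (h : ℕ) where
  base : Set X
  clopen : IsClopen base
  n : Fin h → ℤ
  n_zero : ∀ i : Fin h, (i : ℕ) = 0 → n i = 0
  disj : Pairwise (Function.onFun Disjoint (fun i : Fin h => (T.toEquiv ^ n i) '' base))

namespace Column

variable {T : X ≃ₜ X} {h : ℕ}

/-- The `i`-th level `T^{nᵢ} B₀` of a column. -/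
def level (C : Column T h) (i : Fin h) : Set X := (T.toEquiv ^ C.n i) '' C.base

/-- The union of the levels of a column. -/
def carrier (C : Column T h) : Set X := ⋃ i, C.level i

/-- A *slice* of a column: same integers, base a clopen subset of the original base. -/
def IsSliceOf (C' C : Column T h) : Prop := C'.n = C.n ∧ C'.base ⊆ C.base

end Column

/-- An *array* for `T` of height `h`: a countable collection of pairwise disjoint columns of
height `h` (finite collections are obtained by letting all but finitely many columns have
empty base). -/
structure TArray (T : X ≃ₜ X) (h : ℕ) where
  col : ℕ → Column T h
  disj : Pairwise (Function.onFun Disjoint (fun i => (col i).carrier))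

namespace TArray

variable {T : X ≃ₜ X} {h : ℕ}

/-- The union of all levels of all columns of an array. -/
def carrier (A : TArray T h) : Set X := ⋃ i, (A.col i).carrier

/-- The base of an array: the union of the bases of its columns. -/
def base (A : TArray T h) : Set X := ⋃ i, (A.col i).base

/-- A *sub-array*: each of its columns is a slice of a column of the given array. -/
def IsSubArrayOf (A' A : TArray T h) : Prop := ∀ i, ∃ j, (A'.col i).IsSliceOf (A.col j)

/-- A *refinement*: a sub-array whose levels fill out the levels of the given array. -/
def IsRefinementOf [MeasurableSpace X] (μ : Measure X) (A' A : TArray T h) : Prop :=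
  A'.IsSubArrayOf A ∧ μ A'.carrier = μ A.carrier

end TArray

lemma concat_index_lt {m h : ℕ} (k : Fin m) (i : Fin h) :
    (k : ℕ) * h + (i : ℕ) < m * h :=
  calc (k : ℕ) * h + (i : ℕ) < (k : ℕ) * h + h := Nat.add_lt_add_left i.isLt _
    _ = ((k : ℕ) + 1) * h := by ring
    _ ≤ m * h := Nat.mul_le_mul_right h k.isLt

/-- `D` is the *concatenation* `[C₀, …, C_{m-1}]` of the columns `C k`: the bases of the
`C k` form a column (they are images `T^{m_k}` of the base of `D = C₀`, pairwise disjoint),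
and the levels of `D` are the levels of `C₀, …, C_{m-1}` traversed in order. -/
def Column.IsConcatenationOf {T : X ≃ₜ X} {m h : ℕ}
    (D : Column T (m * h)) (C : Fin m → Column T h) : Prop :=
  ∃ mk : Fin m → ℤ,
    (∀ k : Fin m, (k : ℕ) = 0 → mk k = 0) ∧
    (∀ k, (T.toEquiv ^ mk k) '' D.base = (C k).base) ∧
    Pairwise (Function.onFun Disjoint (fun k => (C k).carrier)) ∧
    ∀ (k : Fin m) (i : Fin h),
      D.n ⟨(k : ℕ) * h + (i : ℕ), concat_index_lt k i⟩ = mk k + (C k).n i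

/-- The data exhibiting the array `Ahat` (of height `m * h`) as an *extension* of the array
`A` (of height `h`): a refinement `ref` of `A` (with each column of `ref` a slice of the
column `wit c` of `A`) such that every column of `Ahat` is a concatenation of columns of
`ref`, and `Ahat` fills out `A`. -/
structure ExtensionData [MeasurableSpace X] (μ : Measure X) {T : X ≃ₜ X} {m h : ℕ}
    (Ahat : TArray T (m * h)) (A : TArray T h) where
  ref : TArray T h
  wit : ℕ → ℕ
  slice : ∀ c, (ref.col c).IsSliceOf (A.col (wit c))
  ref_fill : μ ref.carrier = μ A.carrier
  f : ℕ → Fin m → ℕ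
  concat : ∀ i, (Ahat.col i).IsConcatenationOf (fun k => ref.col (f i k))
  fill : μ Ahat.carrier = μ A.carrier

/-- `Ahat` is an *extension* of `A`. -/
def TArray.IsExtensionOf [MeasurableSpace X] (μ : Measure X) {T : X ≃ₜ X} {m h : ℕ}
    (Ahat : TArray T (m * h)) (A : TArray T h) : Prop :=
  Nonempty (ExtensionData μ Ahat A)

/-- The data exhibiting the array `A` (of height `m * h`) as a *stacking* of the pairwise
disjoint equal-width arrays `Ts 0, …, Ts (m-1)` (of height `h`): refinements `ref k` of
`Ts k` such that every column of `A` is a concatenation `[C₀, …, C_{m-1}]` with `C k` a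
column of `ref k`, and `A` fills out `⋃ k, Ts k`. -/
structure StackingData [MeasurableSpace X] (μ : Measure X) {T : X ≃ₜ X} {m h : ℕ}
    (A : TArray T (m * h)) (Ts : Fin m → TArray T h) where
  ref : Fin m → TArray T h
  ref_is : ∀ k, (ref k).IsRefinementOf μ (Ts k)
  f : ℕ → Fin m → ℕ
  concat : ∀ i, (A.col i).IsConcatenationOf (fun k => (ref k).col (f i k))
  fill : μ A.carrier = μ (⋃ k, (Ts k).carrier)

/-! Each base is cut into countably many clopen pieces on which every level map `T^{nᵢ}` has
image of diameter at most `ε / 2`: a countable clopen basis provides a countable cover by such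
pieces, and `disjointed` makes it a partition. Replacing every column by its slices over these
pieces gives the refinement. -/

open Function Metric
open scoped ENNReal

namespace Homeomorph

theorem toEquiv_zpow (T : X ≃ₜ X) (n : ℤ) : (T ^ n).toEquiv = T.toEquiv ^ n :=
  map_zpow (⟨⟨toEquiv, rfl⟩, fun _ _ => rfl⟩ : (X ≃ₜ X) →* Equiv.Perm X) T n

theorem continuous_toEquiv_zpow (T : X ≃ₜ X) (n : ℤ) : Continuous (T.toEquiv ^ n) := by
  rw [← toEquiv_zpow]
  exact (T ^ n).continuous

end Homeomorph

theorem IsClopen.disjointed {f : ℕ → Set X} (hf : ∀ n, IsClopen (f n)) (n : ℕ) :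
    IsClopen (disjointed f n) := by
  rw [_root_.disjointed, Finset.sup_set_eq_biUnion]
  exact (hf n).diff (isClopen_biUnion_finset fun k _ => hf k)

namespace Fractured

variable {ι Y : Type*} [Finite ι] [PseudoEMetricSpace Y] {g : ι → X → Y} {δ : ℝ≥0∞}

theorem exists_clopen_cover_ediam_image_le (hX : Fractured X) (hg : ∀ i, Continuous (g i))
    (hδ : 0 < δ) :
    ∃ E : ℕ → Set X, (∀ n, IsClopen (E n)) ∧ ⋃ n, E n = univ ∧
      ∀ n i, ediam (g i '' E n) ≤ δ := by
  obtain ⟨B, hBc, hBcl, hB⟩ := hX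
  -- `∅` is added only so that `S` is nonempty and can be enumerated by `ℕ`.
  set S := {W ∈ insert ∅ B | ∀ i, ediam (g i '' W) ≤ δ}
  have hS : S.Countable := (hBc.insert ∅).mono (sep_subset _ _)
  obtain ⟨E, hSE⟩ := hS.exists_eq_range ⟨∅, mem_insert _ _, by simp⟩
  have hES : ∀ n, E n ∈ S := fun n => hSE ▸ mem_range_self n
  refine ⟨E, fun n => ?_, eq_univ_of_forall fun x => ?_, fun n => (hES n).2⟩
  · obtain ⟨hE | hE, -⟩ := hES n
    · exact hE ▸ isClopen_empty
    · exact hBcl _ hE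
  have hxU : x ∈ ⋂ i, g i ⁻¹' eball (g i x) (δ / 2) :=
    mem_iInter.2 fun i => mem_eball_self (ENNReal.half_pos hδ.ne')
  obtain ⟨W, hWB, hxW, hWsub⟩ := hB.exists_subset_of_mem_open hxU
    (isOpen_iInter_of_finite fun i => (hg i).isOpen_preimage _ isOpen_eball)
  have hWS : W ∈ S := by
    refine ⟨mem_insert_of_mem _ hWB, fun i => ?_⟩
    calc ediam (g i '' W) ≤ ediam (eball (g i x) (δ / 2)) :=
          ediam_mono (image_subset_iff.2 fun y hy => mem_iInter.1 (hWsub hy) i)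
      _ ≤ 2 * (δ / 2) := ediam_eball_le
      _ = δ := ENNReal.mul_div_cancel two_ne_zero ENNReal.ofNat_ne_top
  obtain ⟨n, rfl⟩ : W ∈ range E := hSE ▸ hWS
  exact mem_iUnion_of_mem n hxW

theorem exists_clopen_partition_ediam_image_le (hX : Fractured X) (hg : ∀ i, Continuous (g i))
    (hδ : 0 < δ) :
    ∃ E : ℕ → Set X, (∀ n, IsClopen (E n)) ∧ Pairwise (Disjoint on E) ∧ ⋃ n, E n = univ ∧
      ∀ n i, ediam (g i '' E n) ≤ δ := by
  obtain ⟨E, hEcl, hEU, hEδ⟩ := hX.exists_clopen_cover_ediam_image_le hg hδ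
  exact ⟨disjointed E, IsClopen.disjointed hEcl, disjoint_disjointed E,
    iUnion_disjointed.trans hEU,
    fun n i => (ediam_mono (image_mono (disjointed_subset E n))).trans (hEδ n i)⟩

end Fractured

namespace Column

variable {T : X ≃ₜ X} {h : ℕ}

def slice (C : Column T h) (E : Set X) (hE : IsClopen E) (hEC : E ⊆ C.base) : Column T h where
  base := E
  clopen := hE
  n := C.n
  n_zero := C.n_zero
  disj _ _ hij := (C.disj hij).mono (image_mono hEC) (image_mono hEC)

theorem isSliceOf_slice (C : Column T h) {E : Set X} (hE : IsClopen E) (hEC : E ⊆ C.base) :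
    (C.slice E hE hEC).IsSliceOf C :=
  ⟨rfl, hEC⟩

theorem IsSliceOf.level_subset {C' C : Column T h} (hs : C'.IsSliceOf C) (i : Fin h) :
    C'.level i ⊆ C.level i := by
  rw [level, level, hs.1]
  exact image_mono hs.2

theorem IsSliceOf.carrier_subset {C' C : Column T h} (hs : C'.IsSliceOf C) :
    C'.carrier ⊆ C.carrier :=
  iUnion_mono hs.level_subset

theorem IsSliceOf.disjoint_carrier {C₁ C₂ C : Column T h} (h₁ : C₁.IsSliceOf C)
    (h₂ : C₂.IsSliceOf C) (hd : Disjoint C₁.base C₂.base) : Disjoint C₁.carrier C₂.carrier := by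
  refine disjoint_iUnion_left.2 fun i => disjoint_iUnion_right.2 fun j => ?_
  rcases eq_or_ne i j with rfl | hij
  · rw [level, level, h₁.1, h₂.1]
    exact (disjoint_image_iff (Equiv.injective _)).2 hd
  · exact (C.disj hij).mono (h₁.level_subset i) (h₂.level_subset j)

end Column

namespace TArray

variable {T : X ≃ₜ X} {h : ℕ} (A : TArray T h) (F : ℕ → ℕ → Set X)
  (hF : ∀ j m, IsClopen (F j m)) (hFA : ∀ j m, F j m ⊆ (A.col j).base)
  (hFd : ∀ j, Pairwise (Disjoint on F j))

def refine : TArray T h where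
  col k := (A.col (Nat.unpair k).1).slice (F (Nat.unpair k).1 (Nat.unpair k).2) (hF _ _) (hFA _ _)
  disj k k' hkk' := by
    have hs := fun k : ℕ =>
      (A.col (Nat.unpair k).1).isSliceOf_slice (hF _ (Nat.unpair k).2) (hFA _ _)
    by_cases hj : (Nat.unpair k).1 = (Nat.unpair k').1
    · have hm : (Nat.unpair k).2 ≠ (Nat.unpair k').2 := fun hm =>
        hkk' (Nat.pairEquiv.symm.injective (Prod.ext hj hm))
      refine (hs k).disjoint_carrier (hj ▸ hs k') ?_
      show Disjoint (F _ _) (F _ _)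
      rw [← hj]
      exact hFd _ hm
    · exact (A.disj hj).mono (hs k).carrier_subset (hs k').carrier_subset

theorem carrier_refine (hFU : ∀ j, ⋃ m, F j m = (A.col j).base) :
    (A.refine F hF hFA hFd).carrier = A.carrier := by
  refine (Nat.pairEquiv.symm.surjective.iUnion_comp fun p : ℕ × ℕ =>
    ⋃ i, (T.toEquiv ^ (A.col p.1).n i) '' F p.1 p.2).trans ?_
  rw [iUnion_prod']
  refine iUnion_congr fun j => ?_
  rw [iUnion_comm]
  simp only [← image_iUnion, hFU]
  rfl

theorem isRefinementOf_refine [MeasurableSpace X] (μ : Measure X)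
    (hFU : ∀ j, ⋃ m, F j m = (A.col j).base) :
    (A.refine F hF hFA hFd).IsRefinementOf μ A :=
  ⟨fun k => ⟨_, Column.isSliceOf_slice _ _ (hFA _ _)⟩, by rw [carrier_refine A F hF hFA hFd hFU]⟩

end TArray

theorem Column.exists_clopen_partition_base_ediam_le {X : Type*} [PseudoEMetricSpace X]
    (hX : Fractured X) {T : X ≃ₜ X} {h : ℕ} (C : Column T h) {δ : ℝ≥0∞} (hδ : 0 < δ) :
    ∃ F : ℕ → Set X, (∀ m, IsClopen (F m)) ∧ Pairwise (Disjoint on F) ∧ ⋃ m, F m = C.base ∧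
      ∀ m i, ediam ((T.toEquiv ^ C.n i) '' F m) ≤ δ := by
  obtain ⟨E, hEcl, hEd, hEU, hEδ⟩ :=
    hX.exists_clopen_partition_ediam_image_le (fun i => T.continuous_toEquiv_zpow (C.n i)) hδ
  refine ⟨fun m => C.base ∩ E m, fun m => C.clopen.inter (hEcl m),
    fun m m' hmm' => (hEd hmm').mono inter_subset_right inter_subset_right, ?_,
    fun m i => (ediam_mono (image_mono inter_subset_right)).trans (hEδ m i)⟩
  rw [← inter_iUnion, hEU, inter_univ]

theorem exists_refinement_small_diam_general
    {X : Type*} [MetricSpace X]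
    [MeasurableSpace X]
    (hXf : Fractured X)
    (μ : Measure X)
    (T : X ≃ₜ X)
    {h : ℕ} (A : TArray T h) (ε : ℝ) (hε : 0 < ε) :
    ∃ A' : TArray T h, A'.IsRefinementOf μ A ∧
      (⨆ (i : ℕ) (j : Fin h), EMetric.diam ((A'.col i).level j)) < ENNReal.ofReal ε := by
  have hε' : ENNReal.ofReal ε ≠ 0 := (ENNReal.ofReal_pos.2 hε).ne'
  choose F hFcl hFd hFU hFdiam using fun j =>
    (A.col j).exists_clopen_partition_base_ediam_le hXf (ENNReal.half_pos hε')
  have hFA : ∀ j m, F j m ⊆ (A.col j).base := fun j m => hFU j ▸ subset_iUnion (F j) m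
  refine ⟨A.refine F hFcl hFA hFd, A.isRefinementOf_refine F hFcl hFA hFd μ hFU, ?_⟩
  calc (⨆ (k : ℕ) (i : Fin h), ediam (((A.refine F hFcl hFA hFd).col k).level i))
      ≤ ENNReal.ofReal ε / 2 := iSup₂_le fun k i => hFdiam _ _ i
    _ < ENNReal.ofReal ε := ENNReal.half_lt_self hε' ENNReal.ofReal_ne_top

/-- **Lemma 5 of del Junco–Şahin.** Any array has a refinement of diameter less than `ε`,
the diameter of an array being the supremum of the diameters of its levels. -/
theorem exists_refinement_small_diam
    {X : Type*} [MetricSpace X] [CompleteSpace X] [SecondCountableTopology X]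
    [MeasurableSpace X] [BorelSpace X]
    (hXf : Fractured X)
    (μ : Measure X) [IsProbabilityMeasure μ] [NullSingletonClass μ]
    (hfull : ∀ U : Set X, IsOpen U → U.Nonempty → μ U ≠ 0)
    (T : X ≃ₜ X) (hT : MeasurePreserving T μ μ)
    (hTerg : ∀ A : Set X, MeasurableSet A → T ⁻¹' A = A → μ A = 0 ∨ μ Aᶜ = 0)
    {h : ℕ} (A : TArray T h) (ε : ℝ) (hε : 0 < ε) :
    ∃ A' : TArray T h, A'.IsRefinementOf μ A ∧
      (⨆ (i : ℕ) (j : Fin h), EMetric.diam ((A'.col i).level j)) < ENNReal.ofReal ε :=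
  exists_refinement_small_diam_general hXf μ T A ε hε
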